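/- Let φ denote either the maximum function max or the minimum function min on nonempty multisets of integers, and let ≿φ and ≻φ denote the corresponding order (≿max, ≻max or ≿min, ≻min). Let H, H', L, L' be nonempty multisets of integers, and for nonempty H and L define H ⊖ L to be the image of L under ℓ ↦ φ(H) − ℓ. If H ≿φ H' and L' ≿ms L, then (H ⊖ L) ≿dms (H' ⊖ L'). If in addition H ≻φ H', or L' ≻ms L, then (H ⊖ L) ≻dms (H' ⊖ L'). -/

import Mathlib

/-- The maximum of a multiset of integers (0 for the empty multiset; only used on nonempty ones). -/
def mmax (S : Multiset ℤ) : ℤ := WithBot.unbotD 0 ((S.map (fun x : ℤ => (x : WithBot ℤ))).sup)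

/-- The minimum of a multiset of integers (0 for the empty multiset; only used on nonempty ones). -/
def mmin (S : Multiset ℤ) : ℤ := WithTop.untopD 0 ((S.map (fun x : ℤ => (x : WithTop ℤ))).inf)

/-- max order, weak: S ≿max T. -/
def geMax (S T : Multiset ℤ) : Prop := T = 0 ∨ (S ≠ 0 ∧ T ≠ 0 ∧ mmax S ≥ mmax T)

/-- max order, strict: S ≻max T. -/
def gtMax (S T : Multiset ℤ) : Prop := (S ≠ 0 ∧ T ≠ 0 ∧ mmax S > mmax T) ∨ (S ≠ 0 ∧ T = 0)

/-- min order, weak: S ≿min T. -/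
def geMin (S T : Multiset ℤ) : Prop := S = 0 ∨ (S ≠ 0 ∧ T ≠ 0 ∧ mmin S ≥ mmin T)

/-- min order, strict: S ≻min T. -/
def gtMin (S T : Multiset ℤ) : Prop := (S ≠ 0 ∧ T ≠ 0 ∧ mmin S > mmin T) ∨ (S = 0 ∧ T ≠ 0)

/-- multiset order, strict: S ≻ms T. -/
def gtMS (S T : Multiset ℤ) : Prop :=
  ∃ W U V : Multiset ℤ, U ≠ 0 ∧ S = W + U ∧ T = W + V ∧ gtMax U V

/-- multiset order, weak: S ≿ms T. -/
def geMS (S T : Multiset ℤ) : Prop := gtMS S T ∨ S = T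

/-- dual multiset order, strict: S ≻dms T. -/
def gtDMS (S T : Multiset ℤ) : Prop :=
  ∃ W U V : Multiset ℤ, V ≠ 0 ∧ S = W + U ∧ T = W + V ∧ gtMin U V

/-- dual multiset order, weak: S ≿dms T. -/
def geDMS (S T : Multiset ℤ) : Prop := gtDMS S T ∨ S = T

/-!
The map `ℓ ↦ a - ℓ` is order-reversing, so it sends the maximum of `L` to the minimum of its
image: `min (H ⊖ L) = φ H - max L`. Since `L' ≿ms L` forces `max L ≤ max L'`, a strict
inequality `φ H' < φ H` already gives `min (H ⊖ L) > min (H' ⊖ L')`, a `dms`-witness with empty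
common part. If `φ H' = φ H`, both sides are images under the same map, and it turns an
`ms`-witness `L' = W + U`, `L = W + V` into a `dms`-witness with the roles of `U` and `V` swapped.
-/

namespace Multiset

variable {α β : Type*}

lemma ne_zero_of_mem {s : Multiset α} {a : α} (ha : a ∈ s) : s ≠ 0 :=
  ne_of_mem_of_not_mem' ha (notMem_zero a)

lemma map_ne_zero {s : Multiset α} (hs : s ≠ 0) (f : α → β) : s.map f ≠ 0 :=
  map_eq_zero.not.2 hs

lemma sup_map_coe [LinearOrder α] (s : Multiset α) :
    (s.map ((↑) : α → WithBot α)).sup = s.toFinset.max := by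
  rw [Finset.max_eq_sup_coe, Finset.sup_def, toFinset_val, ← sup_dedup,
    ← dedup_map_dedup_eq, sup_dedup]

lemma inf_map_coe [LinearOrder α] (s : Multiset α) :
    (s.map ((↑) : α → WithTop α)).inf = s.toFinset.min := by
  rw [Finset.min_eq_inf_withTop, Finset.inf_def, toFinset_val, ← inf_dedup,
    ← dedup_map_dedup_eq, inf_dedup]

end Multiset

lemma mmax_eq_max' {S : Multiset ℤ} (hS : S ≠ 0) :
    mmax S = S.toFinset.max' (Multiset.toFinset_nonempty.2 hS) := by
  rw [mmax, Multiset.sup_map_coe, ← Finset.coe_max', WithBot.unbotD_coe]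

lemma mmin_eq_min' {S : Multiset ℤ} (hS : S ≠ 0) :
    mmin S = S.toFinset.min' (Multiset.toFinset_nonempty.2 hS) := by
  rw [mmin, Multiset.inf_map_coe, ← Finset.coe_min', WithTop.untopD_coe]

lemma le_mmax {S : Multiset ℤ} {x : ℤ} (hx : x ∈ S) : x ≤ mmax S := by
  rw [mmax_eq_max' (Multiset.ne_zero_of_mem hx)]
  exact Finset.le_max' _ x (Multiset.mem_toFinset.2 hx)

lemma mmin_le {S : Multiset ℤ} {x : ℤ} (hx : x ∈ S) : mmin S ≤ x := by
  rw [mmin_eq_min' (Multiset.ne_zero_of_mem hx)]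
  exact Finset.min'_le _ x (Multiset.mem_toFinset.2 hx)

lemma mmax_mem {S : Multiset ℤ} (hS : S ≠ 0) : mmax S ∈ S := by
  rw [mmax_eq_max' hS]
  exact Multiset.mem_toFinset.1 (Finset.max'_mem _ _)

lemma mmin_mem {S : Multiset ℤ} (hS : S ≠ 0) : mmin S ∈ S := by
  rw [mmin_eq_min' hS]
  exact Multiset.mem_toFinset.1 (Finset.min'_mem _ _)

lemma mmin_map_sub {S : Multiset ℤ} (hS : S ≠ 0) (c : ℤ) :
    mmin (S.map (c - ·)) = c - mmax S := by
  refine le_antisymm (mmin_le (Multiset.mem_map_of_mem _ (mmax_mem hS))) ?_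
  obtain ⟨x, hx, hx_eq⟩ := Multiset.mem_map.1 (mmin_mem (Multiset.map_ne_zero hS (c - ·)))
  rw [← hx_eq]
  linarith [le_mmax hx]

lemma geMax.mmax_le {S T : Multiset ℤ} (h : geMax S T) (hT : T ≠ 0) : mmax T ≤ mmax S := by
  rcases h with rfl | ⟨-, -, h⟩
  exacts [absurd rfl hT, h]

lemma gtMax.mmax_lt {S T : Multiset ℤ} (h : gtMax S T) (hT : T ≠ 0) : mmax T < mmax S := by
  rcases h with ⟨-, -, h⟩ | ⟨-, rfl⟩
  exacts [h, absurd rfl hT]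

lemma geMin.mmin_le {S T : Multiset ℤ} (h : geMin S T) (hS : S ≠ 0) : mmin T ≤ mmin S := by
  rcases h with rfl | ⟨-, -, h⟩
  exacts [absurd rfl hS, h]

lemma gtMin.mmin_lt {S T : Multiset ℤ} (h : gtMin S T) (hS : S ≠ 0) : mmin T < mmin S := by
  rcases h with ⟨-, -, h⟩ | ⟨rfl, -⟩
  exacts [h, absurd rfl hS]

lemma geMS.mmax_le {A B : Multiset ℤ} (h : geMS A B) (hB : B ≠ 0) : mmax B ≤ mmax A := by
  obtain ⟨W, U, V, hU, rfl, rfl, hUV⟩ | rfl := h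
  · rcases Multiset.mem_add.1 (mmax_mem hB) with hW | hV
    · exact le_mmax (Multiset.mem_add.2 (Or.inl hW))
    · calc mmax (W + V) ≤ mmax V := le_mmax hV
        _ ≤ mmax U := (hUV.mmax_lt (Multiset.ne_zero_of_mem hV)).le
        _ ≤ mmax (W + U) := le_mmax (Multiset.mem_add.2 (Or.inr (mmax_mem hU)))
  · exact le_rfl

lemma gtMax.map_sub {U V : Multiset ℤ} (h : gtMax U V) (c : ℤ) :
    gtMin (V.map (c - ·)) (U.map (c - ·)) := by
  rcases h with ⟨hU, hV, hlt⟩ | ⟨hU, rfl⟩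
  · refine Or.inl ⟨Multiset.map_ne_zero hV _, Multiset.map_ne_zero hU _, ?_⟩
    rw [mmin_map_sub hV, mmin_map_sub hU]
    omega
  · exact Or.inr ⟨Multiset.map_zero _, Multiset.map_ne_zero hU _⟩

lemma gtMS.map_sub {A B : Multiset ℤ} (h : gtMS A B) (c : ℤ) :
    gtDMS (B.map (c - ·)) (A.map (c - ·)) := by
  obtain ⟨W, U, V, hU, rfl, rfl, hUV⟩ := h
  exact ⟨W.map (c - ·), V.map (c - ·), U.map (c - ·), Multiset.map_ne_zero hU _,
    Multiset.map_add _ _ _, Multiset.map_add _ _ _, hUV.map_sub c⟩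

lemma gtDMS_map_sub_of_lt {a a' : ℤ} (ha : a' < a) {L L' : Multiset ℤ} (hL : L ≠ 0)
    (hL' : L' ≠ 0) (hmax : mmax L ≤ mmax L') :
    gtDMS (L.map (a - ·)) (L'.map (a' - ·)) := by
  refine ⟨0, _, _, Multiset.map_ne_zero hL' _, (zero_add _).symm, (zero_add _).symm,
    Or.inl ⟨Multiset.map_ne_zero hL _, Multiset.map_ne_zero hL' _, ?_⟩⟩
  rw [mmin_map_sub hL, mmin_map_sub hL']
  omega

lemma gtDMS_map_sub {a a' : ℤ} (ha : a' ≤ a) {L L' : Multiset ℤ} (hL : L ≠ 0) (hL' : L' ≠ 0)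
    (h : geMS L' L) (hs : a' < a ∨ gtMS L' L) :
    gtDMS (L.map (a - ·)) (L'.map (a' - ·)) := by
  rcases ha.lt_or_eq with hlt | rfl
  · exact gtDMS_map_sub_of_lt hlt hL hL' (h.mmax_le hL)
  · exact (hs.resolve_left (lt_irrefl _)).map_sub a'

lemma geDMS_map_sub {a a' : ℤ} (ha : a' ≤ a) {L L' : Multiset ℤ} (hL : L ≠ 0) (hL' : L' ≠ 0)
    (h : geMS L' L) :
    geDMS (L.map (a - ·)) (L'.map (a' - ·)) := by
  by_cases hs : a' < a ∨ gtMS L' L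
  · exact Or.inl (gtDMS_map_sub ha hL hL' h hs)
  · obtain ⟨hnlt, hnms⟩ := not_or.1 hs
    obtain rfl : a' = a := le_antisymm ha (not_lt.1 hnlt)
    rw [h.resolve_left hnms]
    exact Or.inr rfl

/-- Decreasing difference, where the low sets are of type `ms`, the high sets of
type `max` or `min` (with `φ` the corresponding function), and the difference `H ⊖ L`
is the image of `L` under `ℓ ↦ φ H - ℓ`; the difference has type `dms`. -/
theorem diff_decreasing_lowMS (φ : Multiset ℤ → ℤ) (geφ gtφ : Multiset ℤ → Multiset ℤ → Prop)
    (hrel : (φ = mmax ∧ geφ = geMax ∧ gtφ = gtMax) ∨ (φ = mmin ∧ geφ = geMin ∧ gtφ = gtMin))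
    (H H' L L' : Multiset ℤ)
    (hH : H ≠ 0) (hH' : H' ≠ 0) (hL : L ≠ 0) (hL' : L' ≠ 0)
    (h1 : geφ H H') (h2 : geMS L' L) :
    geDMS (L.map (fun l => φ H - l)) (L'.map (fun l => φ H' - l)) ∧
    ((gtφ H H' ∨ gtMS L' L) →
      gtDMS (L.map (fun l => φ H - l)) (L'.map (fun l => φ H' - l))) := by
  obtain ⟨hle, hlt⟩ : φ H' ≤ φ H ∧ (gtφ H H' → φ H' < φ H) := by
    rcases hrel with ⟨rfl, rfl, rfl⟩ | ⟨rfl, rfl, rfl⟩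
    · exact ⟨h1.mmax_le hH', fun h => h.mmax_lt hH'⟩
    · exact ⟨h1.mmin_le hH, fun h => h.mmin_lt hH⟩
  exact ⟨geDMS_map_sub hle hL hL' h2, fun hs => gtDMS_map_sub hle hL hL' h2 (hs.imp_left hlt)⟩
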